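/- arXiv:2402.04083 — 3 statements merged into one kernel-verified Lean document; each statement's English description precedes it below -/
import Mathlib

section
/- For the RS-game (N₀, v) corresponding to an RS-situation, the core admits the reduced description Core(N₀, v) = {x ∈ ℝ^{N₀} : ∑_{i∈N₀} x_i = v(N₀); x_i ≤ v({0, i}) for every i ∈ N; and ∑_{i∈S} x_i ≥ v(S) for every coalition S ⊆ N}. -/
open Finset

/-- An RS-situation with `n` retailers; the supplier is treated separately.
`c` is the unit production cost, `w` the wholesale price function and
`p i` the expected price function of retailer `i`.  All price functions are
decreasing and continuous on `[0, ∞)`, `w` exceeds `c` everywhere,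
`p i 0 > w 0` and `p i` reaches the value `c` at some positive quantity. -/
structure RSSituation (n : ℕ) where
  c : ℝ
  w : ℝ → ℝ
  p : Fin n → ℝ → ℝ
  w_anti : ∀ ⦃q q' : ℝ⦄, 0 ≤ q → q ≤ q' → w q' ≤ w q
  w_cont : ContinuousOn w (Set.Ici 0)
  w_gt_c : ∀ q : ℝ, 0 ≤ q → c < w q
  p_anti : ∀ i : Fin n, ∀ ⦃q q' : ℝ⦄, 0 ≤ q → q ≤ q' → p i q' ≤ p i q
  p_cont : ∀ i : Fin n, ContinuousOn (p i) (Set.Ici 0)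
  p_zero_gt : ∀ i : Fin n, w 0 < p i 0
  exists_eq_c : ∀ i : Fin n, ∃ q : ℝ, 0 < q ∧ p i q = c

namespace RSSituation

variable {n : ℕ}

/-- The feasible set `Q^S ⊆ [0,∞)^S` of order vectors for a coalition `S` of retailers. -/
def QSet (R : RSSituation n) (S : Finset (Fin n)) : Set (S → ℝ) :=
  {q | ∀ i : S, 0 ≤ q i ∧ R.w (∑ j : S, q j) ≤ R.p i.1 (q i)}

/-- The joint profit `∑_{i ∈ S} (p_i(q_i) - w(q_S)) q_i` of a coalition `S` of retailers. -/
def coalProfit (R : RSSituation n) (S : Finset (Fin n)) (q : S → ℝ) : ℝ :=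
  ∑ i : S, (R.p i.1 (q i) - R.w (∑ j : S, q j)) * q i

/-- `q` is an optimal order vector for the coalition `S` of retailers. -/
def IsCoalOpt (R : RSSituation n) (S : Finset (Fin n)) (q : S → ℝ) : Prop :=
  q ∈ R.QSet S ∧ ∀ q' ∈ R.QSet S, R.coalProfit S q' ≤ R.coalProfit S q

/-- The feasible set of order quantities of retailer `i` at unit price `c`. -/
def QcSet (R : RSSituation n) (i : Fin n) : Set ℝ :=
  {q | 0 ≤ q ∧ R.c ≤ R.p i q}

/-- The profit `(p_i(q) - c) q` of retailer `i` at unit price `c`. -/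
def indProfit (R : RSSituation n) (i : Fin n) (q : ℝ) : ℝ :=
  (R.p i q - R.c) * q

/-- `q` is an optimal order quantity for retailer `i` at unit price `c`. -/
def IsIndOpt (R : RSSituation n) (i : Fin n) (q : ℝ) : Prop :=
  q ∈ R.QcSet i ∧ ∀ q' ∈ R.QcSet i, R.indProfit i q' ≤ R.indProfit i q

/-- `v` is the RS-game determined by chosen optimal order vectors `qS S`
(for each retailer coalition `S`) and `qc i` (for each retailer `i`, when
cooperating with the supplier).  Players: `none` is the supplier `0`,
`some i` is retailer `i`. -/
def IsRSGame (R : RSSituation n) (qS : (S : Finset (Fin n)) → (S → ℝ))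
    (qc : Fin n → ℝ) (v : Finset (Option (Fin n)) → ℝ) : Prop :=
  v ∅ = 0 ∧ v {none} = 0 ∧
    (∀ S : Finset (Fin n), S.Nonempty → v (S.image some) = R.coalProfit S (qS S)) ∧
    (∀ S : Finset (Fin n), S.Nonempty →
      v (insert none (S.image some)) = ∑ i ∈ S, R.indProfit i (qc i))

/-- The core of a TU game on the player set `N₀ = Option (Fin n)`. -/
def core (v : Finset (Option (Fin n)) → ℝ) : Set (Option (Fin n) → ℝ) :=
  {x | ∑ i : Option (Fin n), x i = v Finset.univ ∧
    ∀ T : Finset (Option (Fin n)), v T ≤ ∑ i ∈ T, x i}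

end RSSituation

/-!
A coalition containing the supplier can buy at the production cost `c`, so its worth is the sum
of the stand-alone values `v({0, i})` of its retailers: the game is additive on such coalitions.
Subtracting the stability condition for `S₀` from efficiency, `x(S₀) ≥ v(S₀)` becomes
`∑_{i ∉ S} x i ≤ ∑_{i ∉ S} v({0, i})`, and these are all implied by, and include, the bounds
`x i ≤ v({0, i})`.
-/

section OptionCoalitions

variable {ι : Type*} [DecidableEq ι]

theorem Finset.sum_insert_none_image_some {M : Type*} [AddCommMonoid M] (x : Option ι → M)
    (S : Finset ι) :
    ∑ j ∈ insert none (S.image some), x j = x none + ∑ i ∈ S, x (some i) := by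
  rw [sum_insert (by simp), sum_image fun _ _ _ _ h => Option.some_injective _ h]

theorem forall_le_sum_iff_option {M : Type*} [AddCommMonoid M] [LE M]
    (v : Finset (Option ι) → M) (x : Option ι → M) :
    (∀ T, v T ≤ ∑ j ∈ T, x j) ↔
      (∀ S : Finset ι, v (insert none (S.image some)) ≤ x none + ∑ i ∈ S, x (some i)) ∧
        ∀ S : Finset ι, v (S.image some) ≤ ∑ i ∈ S, x (some i) := by
  have sum_image_some (S : Finset ι) : ∑ j ∈ S.image some, x j = ∑ i ∈ S, x (some i) :=
    sum_image fun _ _ _ _ h => Option.some_injective _ h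
  refine ⟨fun h => ⟨fun S => ?_, fun S => ?_⟩, fun ⟨hwith, hwithout⟩ T => ?_⟩
  · simpa only [sum_insert_none_image_some] using h (insert none (S.image some))
  · simpa only [sum_image_some] using h (S.image some)
  · by_cases hT : none ∈ T
    · have hT_eq : insert none (T.eraseNone.image some) = T := by
        rw [image_some_eraseNone, insert_erase hT]
      have := hwith T.eraseNone
      rwa [← sum_insert_none_image_some, hT_eq] at this
    · have hT_eq : T.eraseNone.image some = T := by
        rw [image_some_eraseNone, erase_eq_of_notMem hT]
      have := hwithout T.eraseNone
      rwa [← sum_image_some, hT_eq] at this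

theorem forall_sum_le_add_sum_iff [Fintype ι] {a y : ι → ℝ} {c : ℝ}
    (htotal : c + ∑ i, y i = ∑ i, a i) :
    (∀ S : Finset ι, ∑ i ∈ S, a i ≤ c + ∑ i ∈ S, y i) ↔ ∀ i, y i ≤ a i := by
  refine ⟨fun h i => ?_, fun h S => ?_⟩
  · have hrest := h (univ.erase i)
    rw [← add_sum_erase univ y (mem_univ i), ← add_sum_erase univ a (mem_univ i)] at htotal
    linarith
  · have hcompl : ∑ i ∈ Sᶜ, y i ≤ ∑ i ∈ Sᶜ, a i := sum_le_sum fun i _ => h i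
    rw [← sum_add_sum_compl S y, ← sum_add_sum_compl S a] at htotal
    linarith

end OptionCoalitions

namespace RSSituation.IsRSGame

variable {n : ℕ} {R : RSSituation n} {qS : (S : Finset (Fin n)) → (S → ℝ)} {qc : Fin n → ℝ}
  {v : Finset (Option (Fin n)) → ℝ}

theorem apply_insert_none (hv : R.IsRSGame qS qc v) (S : Finset (Fin n)) :
    v (insert none (S.image some)) = ∑ i ∈ S, R.indProfit i (qc i) := by
  rcases S.eq_empty_or_nonempty with rfl | hS
  · simpa using hv.2.1
  · exact hv.2.2.2 S hS

theorem apply_pair (hv : R.IsRSGame qS qc v) (i : Fin n) :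
    v {none, some i} = R.indProfit i (qc i) := by
  simpa using hv.apply_insert_none {i}

theorem apply_univ (hv : R.IsRSGame qS qc v) :
    v univ = ∑ i, R.indProfit i (qc i) := by
  have huniv : (univ : Finset (Option (Fin n))) = insert none (univ.image some) := by
    ext (_ | i) <;> simp
  rw [huniv, hv.apply_insert_none]

end RSSituation.IsRSGame

theorem rs_game_core_reduced_general (n : ℕ) (R : RSSituation n)
    (qS : (S : Finset (Fin n)) → (S → ℝ)) (qc : Fin n → ℝ)
    (v : Finset (Option (Fin n)) → ℝ) (hv : R.IsRSGame qS qc v) :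
    RSSituation.core v =
      {x : Option (Fin n) → ℝ |
        ∑ i : Option (Fin n), x i = v Finset.univ ∧
        (∀ i : Fin n, x (some i) ≤ v {none, some i}) ∧
        ∀ S : Finset (Fin n), v (S.image some) ≤ ∑ i ∈ S, x (some i)} := by
  ext x
  simp only [RSSituation.core, Set.mem_ofPred_eq, forall_le_sum_iff_option, Fintype.sum_option,
    hv.apply_univ, hv.apply_insert_none, hv.apply_pair]
  exact and_congr_right fun htotal => and_congr_left' (forall_sum_le_add_sum_iff htotal)

/-- Reduced description of the core of an RS-game: the stability conditions
for coalitions containing the supplier can be replaced by the upper bounds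
`x i ≤ v({0, i})` for the retailers. -/
theorem rs_game_core_reduced (n : ℕ) (R : RSSituation n)
    (qS : (S : Finset (Fin n)) → (S → ℝ)) (qc : Fin n → ℝ)
    (hqS : ∀ S : Finset (Fin n), S.Nonempty → R.IsCoalOpt S (qS S))
    (hqc : ∀ i : Fin n, R.IsIndOpt i (qc i))
    (v : Finset (Option (Fin n)) → ℝ) (hv : R.IsRSGame qS qc v) :
    RSSituation.core v =
      {x : Option (Fin n) → ℝ |
        ∑ i : Option (Fin n), x i = v Finset.univ ∧
        (∀ i : Fin n, x (some i) ≤ v {none, some i}) ∧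
        ∀ S : Finset (Fin n), v (S.image some) ≤ ∑ i ∈ S, x (some i)} :=
  rs_game_core_reduced_general n R qS qc v hv
end

section
/- Every RS-game (N₀, v) is balanced; more precisely, the altruistic allocation x^a ∈ ℝ^{N₀} defined by x^a_0 = 0 and x^a_i = v({0, i}) for i ∈ N belongs to Core(N₀, v). -/
open Finset

/-!
A coalition containing the supplier buys at the production cost `c`, so its value is the sum of
the retailers' stand-alone profits `v({0, i})`, and the altruistic allocation meets those
coalitions with equality. A coalition of retailers alone pays the wholesale price `w(q_S) > c`;
each of its optimal order quantities is then still feasible at unit price `c` and earns at least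
as much there, so its value is at most the same sum.
-/

namespace RSSituation

variable {n : ℕ} (R : RSSituation n)

theorem c_lt_w_sum_of_mem_QSet {S : Finset (Fin n)} {q : S → ℝ} (hq : q ∈ R.QSet S) :
    R.c < R.w (∑ j : S, q j) :=
  R.w_gt_c _ (sum_nonneg fun j _ => (hq j).1)

theorem mem_QcSet_of_mem_QSet {S : Finset (Fin n)} {q : S → ℝ} (hq : q ∈ R.QSet S) (i : S) :
    q i ∈ R.QcSet i :=
  ⟨(hq i).1, ((R.c_lt_w_sum_of_mem_QSet hq).trans_le (hq i).2).le⟩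

theorem coalProfit_le_sum_indProfit {S : Finset (Fin n)} {q : S → ℝ} (hq : q ∈ R.QSet S)
    {qc : Fin n → ℝ} (hqc : ∀ i ∈ S, R.IsIndOpt i (qc i)) :
    R.coalProfit S q ≤ ∑ i ∈ S, R.indProfit i (qc i) := by
  rw [← sum_attach S]
  refine sum_le_sum fun i _ => ?_
  have hc := R.c_lt_w_sum_of_mem_QSet hq
  calc (R.p i (q i) - R.w (∑ j : S, q j)) * q i
      ≤ R.indProfit i (q i) := mul_le_mul_of_nonneg_right (by linarith) (hq i).1
    _ ≤ R.indProfit i (qc i) := (hqc i i.2).2 _ (R.mem_QcSet_of_mem_QSet hq i)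

def altruisticAllocation (v : Finset (Option (Fin n)) → ℝ) : Option (Fin n) → ℝ :=
  fun o => o.elim 0 fun i => v {none, some i}

namespace IsRSGame

variable {R} {qS : (S : Finset (Fin n)) → (S → ℝ)} {qc : Fin n → ℝ}
  {v : Finset (Option (Fin n)) → ℝ}

theorem apply_eq_sum_indProfit_of_none_mem (hv : R.IsRSGame qS qc v)
    {T : Finset (Option (Fin n))} (hT : none ∈ T) :
    v T = ∑ i ∈ T.eraseNone, R.indProfit i (qc i) := by
  obtain ⟨-, hv_none, -, hv_insert_none⟩ := hv
  rcases T.eraseNone.eq_empty_or_nonempty with hE | hE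
  · have hT_eq : T = {none} := by
      rw [← insert_erase hT, ← image_some_eraseNone, hE, image_empty]; rfl
    rw [hE, sum_empty, hT_eq, hv_none]
  · have h := hv_insert_none _ hE
    rwa [image_some_eraseNone, insert_erase hT] at h

theorem apply_le_sum_indProfit_of_none_notMem (hv : R.IsRSGame qS qc v)
    (hqS : ∀ S : Finset (Fin n), S.Nonempty → qS S ∈ R.QSet S)
    (hqc : ∀ i : Fin n, R.IsIndOpt i (qc i)) {T : Finset (Option (Fin n))} (hT : none ∉ T) :
    v T ≤ ∑ i ∈ T.eraseNone, R.indProfit i (qc i) := by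
  obtain ⟨hv_empty, -, hv_image_some, -⟩ := hv
  have hT_eq : T.eraseNone.image some = T := by rw [image_some_eraseNone, erase_eq_of_notMem hT]
  rcases T.eraseNone.eq_empty_or_nonempty with hE | hE
  · have hT_empty : T = ∅ := by rw [← hT_eq, hE, image_empty]
    rw [hE, sum_empty, hT_empty, hv_empty]
  · calc v T = v (T.eraseNone.image some) := by rw [hT_eq]
      _ = R.coalProfit _ (qS _) := hv_image_some _ hE
      _ ≤ _ := R.coalProfit_le_sum_indProfit (hqS _ hE) fun i _ => hqc i

theorem altruisticAllocation_mem_core (hv : R.IsRSGame qS qc v)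
    (hqS : ∀ S : Finset (Fin n), S.Nonempty → qS S ∈ R.QSet S)
    (hqc : ∀ i : Fin n, R.IsIndOpt i (qc i)) : altruisticAllocation v ∈ core v := by
  have h_pair (i : Fin n) : v {none, some i} = R.indProfit i (qc i) := by
    have h_erase : eraseNone {none, some i} = {i} := by ext; simp
    rw [hv.apply_eq_sum_indProfit_of_none_mem (mem_insert_self _ _), h_erase, sum_singleton]
  have h_sum (T : Finset (Option (Fin n))) :
      ∑ o ∈ T, altruisticAllocation v o = ∑ i ∈ T.eraseNone, R.indProfit i (qc i) := by
    rw [sum_eraseNone]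
    exact sum_congr rfl fun o _ => by cases o <;> simp [altruisticAllocation, h_pair]
  refine ⟨by rw [h_sum, hv.apply_eq_sum_indProfit_of_none_mem (mem_univ none)], fun T => ?_⟩
  rw [h_sum]
  by_cases hT : none ∈ T
  · exact (hv.apply_eq_sum_indProfit_of_none_mem hT).le
  · exact hv.apply_le_sum_indProfit_of_none_notMem hqS hqc hT

end IsRSGame

end RSSituation

/-- Every RS-game is balanced: the altruistic allocation, giving `0` to the
supplier and `v({0, i})` to each retailer `i`, belongs to the core. -/
theorem rs_game_balanced (n : ℕ) (R : RSSituation n)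
    (qS : (S : Finset (Fin n)) → (S → ℝ)) (qc : Fin n → ℝ)
    (hqS : ∀ S : Finset (Fin n), S.Nonempty → R.IsCoalOpt S (qS S))
    (hqc : ∀ i : Fin n, R.IsIndOpt i (qc i))
    (v : Finset (Option (Fin n)) → ℝ) (hv : R.IsRSGame qS qc v) :
    (fun o : Option (Fin n) => o.elim 0 fun i => v {none, some i}) ∈
        RSSituation.core v ∧
      (RSSituation.core v).Nonempty := by
  have h := hv.altruisticAllocation_mem_core (fun S hS => (hqS S hS).1) hqc
  exact ⟨h, _, h⟩
end

section
/- For every RS-game (N₀, v), the mgpc-solution is a core allocation, ξ(v) ∈ Core(N₀, v), and it assigns a positive payoff to the supplier: ξ_0(v) = n·β > 0. -/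
open Finset

/-!
Buying at the production cost `c`, each retailer can copy its order in a coalition's optimum,
and since `w > c` this strictly raises the joint profit, so `v(S₀) - v(S) > 0` and hence `β > 0`.
Moreover `v(S₀) = ∑_{i ∈ S} v({0, i})`, so paying each retailer `v({0, i}) - β` and the
supplier the remaining `n β` is efficient; a coalition `S` of retailers gets
`v(S₀) - |S| β ≥ v(S)` by the choice of `β`, and `S₀` gets
`v(S₀) + (n - |S|) β ≥ v(S₀)`.
-/

namespace RSSituation

variable {n : ℕ}

/-- The mgpc-solution `ξ(v)`, with `β` as a parameter. -/
def mgpc (v : Finset (Option (Fin n)) → ℝ) (β : ℝ) : Option (Fin n) → ℝ :=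
  fun o => o.elim ((n : ℝ) * β) fun i => v {none, some i} - β

lemma exists_eq_image_some_or_eq_insert_none {α : Type*} [DecidableEq α]
    (T : Finset (Option α)) :
    ∃ S : Finset α, T = S.image some ∨ T = insert none (S.image some) := by
  refine ⟨T.eraseNone, ?_⟩
  rw [image_some_eraseNone]
  by_cases h : none ∈ T
  · exact Or.inr (insert_erase h).symm
  · exact Or.inl (erase_eq_of_notMem h).symm

lemma sum_mgpc_image_some (v : Finset (Option (Fin n)) → ℝ) (β : ℝ) (S : Finset (Fin n)) :
    ∑ o ∈ S.image some, mgpc v β o = ∑ i ∈ S, v {none, some i} - β * #S := by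
  rw [sum_image (fun _ _ _ _ => Option.some_inj.1)]
  simp only [mgpc, Option.elim, sum_sub_distrib, sum_const, nsmul_eq_mul, mul_comm]

lemma sum_mgpc_insert_none (v : Finset (Option (Fin n)) → ℝ) (β : ℝ) (S : Finset (Fin n)) :
    ∑ o ∈ insert none (S.image some), mgpc v β o
      = n * β + (∑ i ∈ S, v {none, some i} - β * #S) := by
  rw [sum_insert (by simp), sum_mgpc_image_some]
  rfl

lemma mgpc_mem_core {v : Finset (Option (Fin n)) → ℝ} {β : ℝ} (hempty : v ∅ = 0)
    (hadd : ∀ S : Finset (Fin n), v (insert none (S.image some)) = ∑ i ∈ S, v {none, some i})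
    (hβ : 0 ≤ β)
    (hgap : ∀ S : Finset (Fin n), S.Nonempty →
      β * #S ≤ v (insert none (S.image some)) - v (S.image some)) :
    mgpc v β ∈ core v := by
  have huniv : (univ : Finset (Option (Fin n))) = insert none (univ.image some) := by
    ext o; cases o <;> simp
  refine ⟨?_, fun T => ?_⟩
  · rw [huniv, sum_mgpc_insert_none, hadd, card_univ, Fintype.card_fin]
    ring
  obtain ⟨S, rfl | rfl⟩ := exists_eq_image_some_or_eq_insert_none T
  · rcases S.eq_empty_or_nonempty with rfl | hS
    · simp [hempty]
    · rw [sum_mgpc_image_some, ← hadd]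
      linarith [hgap S hS]
  · have hcard : (#S : ℝ) ≤ n := by
      exact_mod_cast (card_le_univ S).trans_eq (Fintype.card_fin n)
    rw [sum_mgpc_insert_none, ← hadd]
    linarith [mul_le_mul_of_nonneg_left hcard hβ]

variable (R : RSSituation n)

lemma indProfit_pos_of_isIndOpt {i : Fin n} {q : ℝ} (hq : R.IsIndOpt i q) :
    0 < R.indProfit i q := by
  have hc : R.c < R.p i 0 := (R.w_gt_c 0 le_rfl).trans (R.p_zero_gt i)
  have hnear : ∀ᶠ x in nhdsWithin 0 (Set.Ioi 0), R.c < R.p i x :=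
    ((R.p_cont i 0 Set.self_mem_Ici).eventually (eventually_gt_nhds hc)).filter_mono
      (nhdsWithin_mono 0 Set.Ioi_subset_Ici_self)
  obtain ⟨x, hcx, hx⟩ := (hnear.and self_mem_nhdsWithin).exists
  have hx_pos : 0 < R.indProfit i x := mul_pos (sub_pos.2 hcx) hx
  exact hx_pos.trans_le (hq.2 x ⟨hx.le, hcx.le⟩)

lemma coalProfit_add_margin (S : Finset (Fin n)) (q : S → ℝ) :
    R.coalProfit S q + (R.w (∑ j : S, q j) - R.c) * ∑ j : S, q j
      = ∑ i : S, R.indProfit i (q i) := by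
  simp only [coalProfit, indProfit, mul_sum, ← sum_add_distrib]
  exact sum_congr rfl fun i _ => by ring

lemma coalProfit_lt_sum_indProfit {S : Finset (Fin n)} (hS : S.Nonempty) {q : S → ℝ}
    (hq : q ∈ R.QSet S) {qc : Fin n → ℝ} (hqc : ∀ i, R.IsIndOpt i (qc i)) :
    R.coalProfit S q < ∑ i ∈ S, R.indProfit i (qc i) := by
  have hq_nonneg : ∀ i, 0 ≤ q i := fun i => (hq i).1
  have hQ : 0 ≤ ∑ j : S, q j := sum_nonneg fun i _ => hq_nonneg i
  have hwc : R.c < R.w (∑ j : S, q j) := R.w_gt_c _ hQ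
  have hcopy : ∑ i : S, R.indProfit i (q i) ≤ ∑ i ∈ S, R.indProfit i (qc i) := by
    rw [← sum_coe_sort S]
    exact sum_le_sum fun i _ => (hqc i).2 (q i) ⟨hq_nonneg i, hwc.le.trans (hq i).2⟩
  have hmargin := R.coalProfit_add_margin S q
  rcases hQ.eq_or_lt with hQ0 | hQpos
  · have hzero : ∀ i, q i = 0 := fun i =>
      (sum_eq_zero_iff_of_nonneg fun i _ => hq_nonneg i).1 hQ0.symm i (mem_univ i)
    have hpos : 0 < ∑ i ∈ S, R.indProfit i (qc i) :=
      sum_pos (fun i _ => R.indProfit_pos_of_isIndOpt (hqc i)) hS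
    simp only [hzero, indProfit, mul_zero, sum_const_zero] at hmargin
    linarith
  · linarith [mul_pos (sub_pos.2 hwc) hQpos]

variable {R} {qS : (S : Finset (Fin n)) → (S → ℝ)} {qc : Fin n → ℝ}
  {v : Finset (Option (Fin n)) → ℝ}

lemma IsRSGame.value_insert_none (hv : R.IsRSGame qS qc v) (S : Finset (Fin n)) :
    v (insert none (S.image some)) = ∑ i ∈ S, v {none, some i} := by
  obtain ⟨-, hsupplier, -, hwith_supplier⟩ := hv
  have hpair : ∀ i, v {none, some i} = R.indProfit i (qc i) := fun i => by
    simpa using hwith_supplier {i} (singleton_nonempty i)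
  rcases S.eq_empty_or_nonempty with rfl | hS
  · simpa using hsupplier
  · rw [hwith_supplier S hS]
    exact sum_congr rfl fun i _ => (hpair i).symm

lemma IsRSGame.value_lt_value_insert_none (hv : R.IsRSGame qS qc v)
    (hqS : ∀ S : Finset (Fin n), S.Nonempty → R.IsCoalOpt S (qS S))
    (hqc : ∀ i, R.IsIndOpt i (qc i)) {S : Finset (Fin n)} (hS : S.Nonempty) :
    v (S.image some) < v (insert none (S.image some)) := by
  rw [hv.2.2.1 S hS, hv.2.2.2 S hS]
  exact R.coalProfit_lt_sum_indProfit hS (hqS S hS).1 hqc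

end RSSituation

/-- The mgpc-solution is a core allocation and assigns a positive payoff
`n·β` to the supplier. -/
theorem rs_game_mgpc_in_core (n : ℕ) (R : RSSituation n)
    (qS : (S : Finset (Fin n)) → (S → ℝ)) (qc : Fin n → ℝ)
    (hqS : ∀ S : Finset (Fin n), S.Nonempty → R.IsCoalOpt S (qS S))
    (hqc : ∀ i : Fin n, R.IsIndOpt i (qc i))
    (v : Finset (Option (Fin n)) → ℝ) (hv : R.IsRSGame qS qc v)
    (β : ℝ)
    (hβ_mem : ∃ S : Finset (Fin n), S.Nonempty ∧
      β = (v (insert none (S.image some)) - v (S.image some)) / (S.card : ℝ))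
    (hβ_min : ∀ S : Finset (Fin n), S.Nonempty →
      β ≤ (v (insert none (S.image some)) - v (S.image some)) / (S.card : ℝ)) :
    (fun o : Option (Fin n) =>
        o.elim ((n : ℝ) * β) fun i => v {none, some i} - β) ∈
        RSSituation.core v ∧
      0 < (n : ℝ) * β := by
  have hcard_pos : ∀ S : Finset (Fin n), S.Nonempty → (0 : ℝ) < S.card := fun S hS => by
    exact_mod_cast hS.card_pos
  obtain ⟨S, hS, hβS⟩ := hβ_mem
  have hβ : 0 < β := hβS ▸ div_pos
    (sub_pos.2 (hv.value_lt_value_insert_none hqS hqc hS)) (hcard_pos S hS)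
  have hn : (0 : ℝ) < n := by exact_mod_cast Fin.pos hS.choose
  have hgap : ∀ T : Finset (Fin n), T.Nonempty →
      β * T.card ≤ v (insert none (T.image some)) - v (T.image some) := fun T hT =>
    (le_div_iff₀ (hcard_pos T hT)).1 (hβ_min T hT)
  exact ⟨RSSituation.mgpc_mem_core hv.1 hv.value_insert_none hβ.le hgap, mul_pos hn hβ⟩
end
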